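/- arXiv:1003.3175 — 2 statements merged into one kernel-verified Lean document; each statement's English description precedes it below -/
import Mathlib

section
/- Let Q be a set with binary operations · , \ and / such that for all x, y in Q: x·(x\y) = y, (y·x)/x = y, x/(y\x) = y, and (x/y)\x = y. Then all six quasigroup identities hold in Q; in particular, (y/x)·x = y and x\(x·y) = y for all x, y in Q (so (Q, ·, \, /) is an equational quasigroup). -/
section

variable {Q : Type*} {mul ld rd : Q → Q → Q}

theorem rd_mul_cancel (hA : ∀ x y, mul x (ld x y) = y) (hR : ∀ x y, ld (rd x y) x = y)
    (x y : Q) : mul (rd y x) x = y :=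
  calc mul (rd y x) x = mul (rd y x) (ld (rd y x) y) := by rw [hR]
    _ = y := hA _ _

theorem ld_mul_cancel_left (hD : ∀ x y, rd (mul y x) x = y) (hR : ∀ x y, ld (rd x y) x = y)
    (x y : Q) : ld x (mul x y) = y :=
  calc ld x (mul x y) = ld (rd (mul x y) y) (mul x y) := by rw [hD]
    _ = y := hR _ _

theorem rd_ld_cancel (hA : ∀ x y, mul x (ld x y) = y) (hD : ∀ x y, rd (mul y x) x = y)
    (x y : Q) : rd x (ld y x) = y :=
  calc rd x (ld y x) = rd (mul y (ld y x)) (ld y x) := by rw [hA]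
    _ = y := hD _ _

end

theorem quasigroup_of_ADTR_general {Q : Type*} (mul ld rd : Q → Q → Q)
    (hA : ∀ x y, mul x (ld x y) = y)
    (hD : ∀ x y, rd (mul y x) x = y)
    (hR : ∀ x y, ld (rd x y) x = y) :
    (∀ x y, mul x (ld x y) = y) ∧ (∀ x y, mul (rd y x) x = y) ∧
    (∀ x y, ld x (mul x y) = y) ∧ (∀ x y, rd (mul y x) x = y) ∧
    (∀ x y, rd x (ld y x) = y) ∧ (∀ x y, ld (rd x y) x = y) :=
  ⟨hA, rd_mul_cancel hA hR, ld_mul_cancel_left hD hR, hD, rd_ld_cancel hA hD, hR⟩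

/-- An algebra (Q, ·, \, /) satisfying the given identities satisfies all six
Birkhoff quasigroup identities (A), (C), (B), (D), (T), (R), i.e. it is an
equational quasigroup. -/
theorem quasigroup_of_ADTR {Q : Type*} (mul ld rd : Q → Q → Q)
    (hA : ∀ x y, mul x (ld x y) = y)
    (hD : ∀ x y, rd (mul y x) x = y)
    (hT : ∀ x y, rd x (ld y x) = y)
    (hR : ∀ x y, ld (rd x y) x = y) :
    (∀ x y, mul x (ld x y) = y) ∧ (∀ x y, mul (rd y x) x = y) ∧
    (∀ x y, ld x (mul x y) = y) ∧ (∀ x y, rd (mul y x) x = y) ∧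
    (∀ x y, rd x (ld y x) = y) ∧ (∀ x y, ld (rd x y) x = y) :=
  quasigroup_of_ADTR_general mul ld rd hA hD hR
end

section
/- Let Q be a set with binary operations · , \ and / such that for all x, y in Q: (y/x)·x = y, x\(x·y) = y, x/(y\x) = y, and (x/y)\x = y. Then all six quasigroup identities hold in Q; in particular, x·(x\y) = y and (y·x)/x = y for all x, y in Q (so (Q, ·, \, /) is an equational quasigroup). -/
section QuasigroupIdentities

variable {Q : Type*} (mul ld rd : Q → Q → Q)

/-- By (T), `x = y / (x \ y)`, so `x · (x \ y) = (y / (x \ y)) · (x \ y) = y`. -/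
theorem mul_ld_of_mul_rd_of_rd_ld (hC : ∀ x y, mul (rd y x) x = y)
    (hT : ∀ x y, rd x (ld y x) = y) (x y : Q) : mul x (ld x y) = y :=
  calc mul x (ld x y) = mul (rd y (ld x y)) (ld x y) := by rw [hT]
    _ = y := hC _ _

/-- By (B), `x = y \ (y · x)`, so `(y · x) / x = (y · x) / (y \ (y · x)) = y`. -/
theorem rd_mul_of_ld_mul_of_rd_ld (hB : ∀ x y, ld x (mul x y) = y)
    (hT : ∀ x y, rd x (ld y x) = y) (x y : Q) : rd (mul y x) x = y :=
  calc rd (mul y x) x = rd (mul y x) (ld y (mul y x)) := by rw [hB]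
    _ = y := hT _ _

end QuasigroupIdentities

/-- An algebra (Q, ·, \, /) satisfying the given identities satisfies all six
Birkhoff quasigroup identities (A), (C), (B), (D), (T), (R), i.e. it is an
equational quasigroup. -/
theorem quasigroup_of_CBTR {Q : Type*} (mul ld rd : Q → Q → Q)
    (hC : ∀ x y, mul (rd y x) x = y)
    (hB : ∀ x y, ld x (mul x y) = y)
    (hT : ∀ x y, rd x (ld y x) = y)
    (hR : ∀ x y, ld (rd x y) x = y) :
    (∀ x y, mul x (ld x y) = y) ∧ (∀ x y, mul (rd y x) x = y) ∧
    (∀ x y, ld x (mul x y) = y) ∧ (∀ x y, rd (mul y x) x = y) ∧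
    (∀ x y, rd x (ld y x) = y) ∧ (∀ x y, ld (rd x y) x = y) :=
  ⟨mul_ld_of_mul_rd_of_rd_ld mul ld rd hC hT, hC, hB,
    rd_mul_of_ld_mul_of_rd_ld mul ld rd hB hT, hT, hR⟩
end
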